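/- arXiv:1909.00885 — 9 statements merged into one kernel-verified Lean document; each statement's English description precedes it below -/
import Mathlib

section
/- Let A be a finite type and J₁, J₂ : A → ℝ. Then J₁ and J₂ are action consistent if and only if there exists a strictly increasing function f : ℝ → ℝ such that f(J₁(a)) = J₂(a) for every a ∈ A. -/
/-- Two objective value functions are *action consistent* if they induce the
same strict order on candidate actions. -/
def ActionConsistent {A : Type*} (J₁ J₂ : A → ℝ) : Prop :=
  ∀ a b : A, J₁ a < J₁ b ↔ J₂ a < J₂ b

theorem actionConsistent_iff_strictMono {A : Type*} [Fintype A] (J₁ J₂ : A → ℝ) :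
    ActionConsistent J₁ J₂ ↔
      ∃ f : ℝ → ℝ, StrictMono f ∧ ∀ a : A, f (J₁ a) = J₂ a := by
  constructor
  · intro hc
    classical
    -- `J₁ a = J₁ b → J₂ a = J₂ b`
    have heq : ∀ a b : A, J₁ a = J₁ b → J₂ a = J₂ b := by
      intro a b h
      have h1 : ¬ J₂ a < J₂ b := by rw [← hc]; simp [h]
      have h2 : ¬ J₂ b < J₂ a := by rw [← hc]; simp [h]
      linarith
    -- find ε > 0 with ε * (J₁ b - J₁ a) ≤ J₂ b - J₂ a whenever J₁ a < J₁ b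
    obtain ⟨ε, hε, key⟩ : ∃ ε : ℝ, 0 < ε ∧
        ∀ a b : A, J₁ a < J₁ b → ε * (J₁ b - J₁ a) ≤ J₂ b - J₂ a := by
      set P : Finset (A × A) :=
        Finset.univ.filter (fun p => J₁ p.1 < J₁ p.2) with hP
      rcases P.eq_empty_or_nonempty with hPe | hPn
      · refine ⟨1, one_pos, fun a b hab => ?_⟩
        exfalso
        have : (a, b) ∈ P := by simp [hP, hab]
        simp [hPe] at this
      · set F : A × A → ℝ := fun p => (J₂ p.2 - J₂ p.1) / (J₁ p.2 - J₁ p.1) with hF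
        obtain ⟨p₀, hp₀, hmin⟩ := P.exists_min_image F hPn
        have hp₀lt : J₁ p₀.1 < J₁ p₀.2 := by
          have := hp₀; simp [hP] at this; exact this
        have hFpos : 0 < F p₀ := by
          have h2 : J₂ p₀.1 < J₂ p₀.2 := (hc _ _).1 hp₀lt
          exact div_pos (by linarith) (by linarith)
        refine ⟨F p₀, hFpos, fun a b hab => ?_⟩
        have hmem : (a, b) ∈ P := by simp [hP, hab]
        have hle : F p₀ ≤ F (a, b) := hmin _ hmem
        have hd : 0 < J₁ b - J₁ a := by linarith
        have : F p₀ * (J₁ b - J₁ a) ≤ F (a, b) * (J₁ b - J₁ a) :=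
          mul_le_mul_of_nonneg_right hle hd.le
        calc F p₀ * (J₁ b - J₁ a) ≤ F (a, b) * (J₁ b - J₁ a) := this
          _ = J₂ b - J₂ a := by
              simp only [hF]
              field_simp
    -- the step part on the range of J₁
    set s : Set ℝ := Set.range J₁ with hs
    have hsfin : s.Finite := Set.finite_range J₁
    set h0 : ℝ → ℝ := fun x =>
      if h : ∃ a : A, J₁ a = x then J₂ h.choose - ε * x else 0 with hh0
    have h0val : ∀ a : A, h0 (J₁ a) = J₂ a - ε * J₁ a := by
      intro a
      have hex : ∃ b : A, J₁ b = J₁ a := ⟨a, rfl⟩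
      have := heq hex.choose a hex.choose_spec
      simp [hh0, dif_pos hex, this]
    have hmono : MonotoneOn h0 s := by
      rintro x ⟨a, rfl⟩ y ⟨b, rfl⟩ hxy
      rcases eq_or_lt_of_le hxy with h | h
      · rw [h]
      · have := key a b h
        rw [h0val, h0val]
        nlinarith
    obtain ⟨H, hHmono, hHeq⟩ := hmono.exists_monotone_extension
      (hsfin.image h0).bddBelow (hsfin.image h0).bddAbove
    refine ⟨fun x => ε * x + H x, ?_, ?_⟩
    · intro x y hxy
      have h1 : ε * x < ε * y := by nlinarith
      have h2 : H x ≤ H y := hHmono hxy.le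
      dsimp only
      linarith
    · intro a
      have h1 : H (J₁ a) = h0 (J₁ a) := (hHeq ⟨a, rfl⟩).symm
      show ε * J₁ a + H (J₁ a) = J₂ a
      rw [h1, h0val]
      ring
  · rintro ⟨f, hf, hfa⟩ a b
    rw [← hfa a, ← hfa b]
    exact hf.lt_iff_lt.symm
end

section
/- Let A be a finite nonempty type and J, J_s : A → ℝ. If J and J_s are action consistent, then the balanced simplification offset between them is zero: the infimum, over all strictly increasing functions f : ℝ → ℝ, of max_{a ∈ A} |J(a) − f(J_s(a))| equals 0. -/
theorem balancedOffset_eq_zero_of_actionConsistent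
    {A : Type*} [Fintype A] [Nonempty A] (J Js : A → ℝ)
    (h : ActionConsistent J Js) :
    sInf { γ : ℝ | ∃ f : ℝ → ℝ, StrictMono f ∧
      γ = Finset.univ.sup' Finset.univ_nonempty (fun a => |J a - f (Js a)|) } = 0 := by
  classical
  set S := { γ : ℝ | ∃ f : ℝ → ℝ, StrictMono f ∧
      γ = Finset.univ.sup' Finset.univ_nonempty (fun a => |J a - f (Js a)|) } with hS
  -- Js a = Js b → J a = J b
  have hEq : ∀ a b : A, Js a = Js b → J a = J b := by
    intro a b hab
    have h1 : ¬ J a < J b := by rw [h a b, hab]; exact lt_irrefl _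
    have h2 : ¬ J b < J a := by rw [h b a, hab]; exact lt_irrefl _
    linarith [not_lt.mp h1, not_lt.mp h2]
  -- the finite set of "slopes"
  let P : Finset (A × A) := Finset.univ.filter (fun p => Js p.1 < Js p.2)
  let c : ℝ :=
    if hP : P.Nonempty then P.inf' hP (fun p => (J p.2 - J p.1) / (Js p.2 - Js p.1)) else 1
  have hratio : ∀ p ∈ P, 0 < (J p.2 - J p.1) / (Js p.2 - Js p.1) := by
    intro p hp
    have hlt : Js p.1 < Js p.2 := (Finset.mem_filter.mp hp).2
    have hJ : J p.1 < J p.2 := (h p.1 p.2).mpr hlt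
    exact div_pos (by linarith) (by linarith)
  have hc_pos : 0 < c := by
    unfold c
    split
    · next hP => exact (Finset.lt_inf'_iff hP).mpr (fun p hp => hratio p hp)
    · exact one_pos
  have hc_slope : ∀ a b : A, Js a < Js b → c * (Js b - Js a) ≤ J b - J a := by
    intro a b hab
    have hmem : (a, b) ∈ P := Finset.mem_filter.mpr ⟨Finset.mem_univ _, hab⟩
    have hP : P.Nonempty := ⟨_, hmem⟩
    have hcle : c ≤ (J b - J a) / (Js b - Js a) := by
      unfold c
      rw [dif_pos hP]
      exact Finset.inf'_le _ hmem
    have hd : 0 < Js b - Js a := by linarith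
    calc c * (Js b - Js a) ≤ ((J b - J a) / (Js b - Js a)) * (Js b - Js a) := by
          exact mul_le_mul_of_nonneg_right hcle hd.le
      _ = J b - J a := div_mul_cancel₀ _ hd.ne'
  -- partial function on the range of Js
  let g : ℝ → ℝ := fun x => if hx : ∃ a, Js a = x then J hx.choose - c * x else 0
  have hg_val : ∀ a : A, g (Js a) = J a - c * Js a := by
    intro a
    have hx : ∃ b, Js b = Js a := ⟨a, rfl⟩
    have : J hx.choose = J a := hEq _ _ hx.choose_spec
    simp only [g, dif_pos hx, this]
  have hg_mono : MonotoneOn g (Set.range Js) := by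
    rintro x ⟨a, rfl⟩ y ⟨b, rfl⟩ hxy
    rw [hg_val a, hg_val b]
    rcases eq_or_lt_of_le hxy with heq | hlt
    · rw [hEq a b heq, heq]
    · have := hc_slope a b hlt
      nlinarith
  have hfin : (g '' Set.range Js).Finite := (Set.finite_range Js).image g
  obtain ⟨G, hG_mono, hG_eq⟩ :=
    hg_mono.exists_monotone_extension hfin.bddBelow hfin.bddAbove
  let f : ℝ → ℝ := fun x => G x + c * x
  have hf_mono : StrictMono f :=
    hG_mono.add_strictMono (strictMono_mul_left_of_pos hc_pos)
  have hf_val : ∀ a : A, f (Js a) = J a := by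
    intro a
    have : G (Js a) = g (Js a) := (hG_eq ⟨a, rfl⟩).symm
    simp only [f, this, hg_val a]
    ring
  -- 0 ∈ S
  have h0 : (0 : ℝ) ∈ S := by
    refine ⟨f, hf_mono, ?_⟩
    have hzero : (fun a : A => |J a - f (Js a)|) = fun _ => (0 : ℝ) := by
      funext a; rw [hf_val a]; simp
    rw [hzero, Finset.sup'_const]
  -- every element of S is nonneg
  have hlb : ∀ γ ∈ S, (0 : ℝ) ≤ γ := by
    rintro γ ⟨f', -, rfl⟩
    obtain a := Classical.arbitrary A
    exact le_trans (abs_nonneg (J a - f' (Js a)))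
      (Finset.le_sup' (fun a => |J a - f' (Js a)|) (Finset.mem_univ a))
  exact le_antisymm (csInf_le ⟨0, hlb⟩ h0) (le_csInf ⟨0, h0⟩ hlb)
end

section
/- Let A be a finite nonempty type, J, J_s : A → ℝ, let a* ∈ A be a maximizer of J and a*_s ∈ A a maximizer of J_s. Then 0 ≤ J(a*) − J(a*_s) ≤ 2 · γ*(J, J_s), where γ*(J, J_s) is the infimum, over all strictly increasing f : ℝ → ℝ, of max_{a ∈ A} |J(a) − f(J_s(a))|. -/
theorem loss_le_two_mul_balancedOffset {A : Type*} [Fintype A] [Nonempty A]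
    (J Js : A → ℝ) (astar astars : A)
    (hstar : ∀ a : A, J a ≤ J astar) (hstars : ∀ a : A, Js a ≤ Js astars) :
    0 ≤ J astar - J astars ∧
      J astar - J astars ≤
        2 * sInf { γ : ℝ | ∃ f : ℝ → ℝ, StrictMono f ∧
          γ = Finset.univ.sup' Finset.univ_nonempty (fun a => |J a - f (Js a)|) } := by
  constructor
  · linarith [hstar astars]
  · set S := { γ : ℝ | ∃ f : ℝ → ℝ, StrictMono f ∧
      γ = Finset.univ.sup' Finset.univ_nonempty (fun a => |J a - f (Js a)|) }
    have hne : S.Nonempty := ⟨_, id, strictMono_id, rfl⟩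
    have hkey : ∀ γ ∈ S, (J astar - J astars) / 2 ≤ γ := by
      rintro γ ⟨f, hf, rfl⟩
      have h1 : |J astar - f (Js astar)| ≤ _ :=
        Finset.le_sup' (fun a => |J a - f (Js a)|) (Finset.mem_univ astar)
      have h2 : |J astars - f (Js astars)| ≤ _ :=
        Finset.le_sup' (fun a => |J a - f (Js a)|) (Finset.mem_univ astars)
      have h3 : f (Js astar) ≤ f (Js astars) := hf.monotone (hstars astar)
      have h1' := abs_le.mp h1
      have h2' := abs_le.mp h2
      linarith [h1'.1, h1'.2, h2'.1, h2'.2]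
    have := le_csInf hne hkey
    linarith
end

section
/- Let R be an N×N real upper triangular matrix and S a set of indices such that for every i ∈ S, all off-diagonal entries of R in row i and in column i are zero (R i j = 0 and R j i = 0 whenever j ≠ i). Let σ be a permutation of the indices {0,…,N−1} such that for all indices a, b: if σ(a) ∉ S, σ(b) ∉ S and σ(a) < σ(b), then a < b. Then the permuted matrix R' defined by R'(a, b) = R(σ(a), σ(b)) is upper triangular. -/
theorem permuted_sparsified_upper_triangular {N : ℕ}
    (R : Matrix (Fin N) (Fin N) ℝ) (S : Set (Fin N))
    (hR : ∀ i j : Fin N, j < i → R i j = 0)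
    (hS : ∀ i ∈ S, ∀ j : Fin N, j ≠ i → R i j = 0 ∧ R j i = 0)
    (σ : Equiv.Perm (Fin N))
    (hσ : ∀ a b : Fin N, σ a ∉ S → σ b ∉ S → σ a < σ b → a < b) :
    ∀ a b : Fin N, b < a → R (σ a) (σ b) = 0 := by
  intro a b hba
  have hne : σ b ≠ σ a := fun h => absurd (σ.injective h) (Fin.ne_of_lt hba)
  by_cases haS : σ a ∈ S
  · exact (hS _ haS _ hne).1
  by_cases hbS : σ b ∈ S
  · exact (hS _ hbS _ (Ne.symm hne)).2
  rcases lt_trichotomy (σ b) (σ a) with h | h | h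
  · exact hR _ _ h
  · exact absurd h hne
  · exact absurd (hσ a b haS hbS h) (not_lt.mpr hba.le)
end

section
/- Let n = n₁ + n₂ and let R be a real n×n upper triangular matrix with block form R = [[R₁₁, R₁₂],[0, R₂₂]], where R₁₁ is the n₁×n₁ leading block. Let D₁₁ be the diagonal matrix whose diagonal equals the diagonal of R₁₁, and define the sparsified matrix R_s = [[D₁₁, 0],[0, R₂₂]] (i.e., R with all off-diagonal entries of its first n₁ rows set to zero). Let U be any real h×n matrix whose first n₁ columns are identically zero. Then det(Rᵀ R + Uᵀ U) = det(R_sᵀ R_s + Uᵀ U). -/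
open Matrix

theorem sparsified_gram_det_eq {n₁ n₂ h : ℕ}
    (R₁₁ : Matrix (Fin n₁) (Fin n₁) ℝ) (R₁₂ : Matrix (Fin n₁) (Fin n₂) ℝ)
    (R₂₂ : Matrix (Fin n₂) (Fin n₂) ℝ)
    (htri₁ : ∀ i j : Fin n₁, j < i → R₁₁ i j = 0)
    (htri₂ : ∀ i j : Fin n₂, j < i → R₂₂ i j = 0)
    (U : Matrix (Fin h) (Fin n₁ ⊕ Fin n₂) ℝ)
    (hU : ∀ (r : Fin h) (i : Fin n₁), U r (Sum.inl i) = 0) :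
    letI R : Matrix (Fin n₁ ⊕ Fin n₂) (Fin n₁ ⊕ Fin n₂) ℝ :=
      Matrix.fromBlocks R₁₁ R₁₂ 0 R₂₂
    letI Rs : Matrix (Fin n₁ ⊕ Fin n₂) (Fin n₁ ⊕ Fin n₂) ℝ :=
      Matrix.fromBlocks (Matrix.diagonal fun i => R₁₁ i i) 0 0 R₂₂
    (Rᵀ * R + Uᵀ * U).det = (Rsᵀ * Rs + Uᵀ * U).det := by
  set W : Matrix (Fin n₂) (Fin n₂) ℝ :=
    fun j k => ∑ r, U r (Sum.inr j) * U r (Sum.inr k) with hW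
  have hUU : Uᵀ * U = fromBlocks 0 0 0 W := by
    ext x y
    cases x <;> cases y <;>
      simp [mul_apply, fromBlocks, hU, hW]
  set K : Matrix (Fin n₂) (Fin n₂) ℝ := R₂₂ᵀ * R₂₂ + W with hK
  have hL : (fromBlocks R₁₁ R₁₂ 0 R₂₂)ᵀ * fromBlocks R₁₁ R₁₂ 0 R₂₂ + Uᵀ * U =
      fromBlocks R₁₁ᵀ 0 R₁₂ᵀ 1 * fromBlocks R₁₁ R₁₂ 0 K := by
    rw [hUU]
    rw [fromBlocks_transpose, fromBlocks_multiply, fromBlocks_multiply,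
      fromBlocks_add]
    congr 1 <;> simp [hK, add_assoc]
  have hR : (fromBlocks (Matrix.diagonal fun i => R₁₁ i i) 0 0 R₂₂)ᵀ *
      fromBlocks (Matrix.diagonal fun i => R₁₁ i i) 0 0 R₂₂ + Uᵀ * U =
      fromBlocks ((Matrix.diagonal fun i => R₁₁ i i) *
        (Matrix.diagonal fun i => R₁₁ i i)) 0 0 K := by
    rw [hUU]
    rw [fromBlocks_transpose, fromBlocks_multiply, fromBlocks_add]
    congr 1 <;> simp [hK, Matrix.diagonal_transpose]
  have hdet₁₁ : R₁₁.det = ∏ i, R₁₁ i i :=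
    Matrix.det_of_upperTriangular (by intro i j hij; exact htri₁ i j hij)
  rw [hL, hR, Matrix.det_mul, Matrix.det_fromBlocks_zero₁₂,
    Matrix.det_fromBlocks_zero₂₁, Matrix.det_fromBlocks_zero₂₁,
    Matrix.det_mul, Matrix.det_diagonal, Matrix.det_transpose, hdet₁₁,
    Matrix.det_one, mul_one, mul_assoc]
end

section
/- Let n = n₁ + n₂ and let R be a real n×n upper triangular matrix with block form R = [[R₁₁, R₁₂],[0, R₂₂]] (R₁₁ of size n₁×n₁); let D₁₁ be the diagonal matrix with the same diagonal as R₁₁ and R_s = [[D₁₁, 0],[0, R₂₂]]. For m ≥ 0, let Λ̆ be the (n+m)×(n+m) block-diagonal augmentation [[Rᵀ R, 0],[0, 0]] and Λ̆_s = [[R_sᵀ R_s, 0],[0, 0]]. Let U be any real h×(n+m) matrix whose first n₁ columns are identically zero. Then det(Λ̆ + Uᵀ U) = det(Λ̆_s + Uᵀ U). -/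
open Matrix
lemma key_zero {n₁ n₂ m h : ℕ}
    (A : Matrix (Fin n₁) (Fin n₁) ℝ) (B : Matrix (Fin n₁) (Fin n₂) ℝ)
    (C : Matrix (Fin n₂) (Fin n₂) ℝ)
    (U : Matrix (Fin h) ((Fin n₁ ⊕ Fin n₂) ⊕ Fin m) ℝ)
    (hU : ∀ (r : Fin h) (i : Fin n₁), U r (Sum.inl (Sum.inl i)) = 0)
    (hA : A.det = 0) :
    (Matrix.fromBlocks ((Matrix.fromBlocks A B 0 C)ᵀ * (Matrix.fromBlocks A B 0 C)) 0 0 0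
      + Uᵀ * U).det = 0 := by
  obtain ⟨v, hv0, hv⟩ := Matrix.exists_mulVec_eq_zero_iff.mpr hA
  apply Matrix.exists_mulVec_eq_zero_iff.mp
  refine ⟨Sum.elim (Sum.elim v 0) 0, ?_, ?_⟩
  · intro hc
    apply hv0
    funext i
    exact congrFun hc (Sum.inl (Sum.inl i))
  · have hRv : (Matrix.fromBlocks A B 0 C) *ᵥ Sum.elim v 0 = 0 := by
      rw [fromBlocks_mulVec]
      simp [Sum.elim_comp_inl, Sum.elim_comp_inr, hv]
    have hUv : U *ᵥ Sum.elim (Sum.elim v 0) 0 = 0 := by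
      funext r
      simp [mulVec, dotProduct, Fintype.sum_sum_type, hU]
    rw [add_mulVec, ← mulVec_mulVec, hUv, mulVec_zero, add_zero, fromBlocks_mulVec]
    simp only [Sum.elim_comp_inl, Sum.elim_comp_inr, ← mulVec_mulVec, hRv]
    simp

section
variable {n₁ n₂ m h : ℕ}
  (R₁₁ : Matrix (Fin n₁) (Fin n₁) ℝ) (R₁₂ : Matrix (Fin n₁) (Fin n₂) ℝ)
  (R₂₂ : Matrix (Fin n₂) (Fin n₂) ℝ)
  (U : Matrix (Fin h) ((Fin n₁ ⊕ Fin n₂) ⊕ Fin m) ℝ)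

noncomputable def eAs : (Fin n₁ ⊕ (Fin n₂ ⊕ Fin m)) ≃ ((Fin n₁ ⊕ Fin n₂) ⊕ Fin m) :=
  (Equiv.sumAssoc (Fin n₁) (Fin n₂) (Fin m)).symm

def Q0 : Matrix (Fin n₁) (Fin n₂ ⊕ Fin m) ℝ :=
  Matrix.of fun i j => Sum.elim (fun k => R₁₂ i k) (fun _ => (0:ℝ)) j

noncomputable def U2 : Matrix (Fin h) (Fin n₂ ⊕ Fin m) ℝ :=
  U.submatrix id (fun j => eAs (Sum.inr j))

lemma hM_eq (hU : ∀ (r : Fin h) (i : Fin n₁), U r (Sum.inl (Sum.inl i)) = 0) :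
    (Matrix.fromBlocks ((Matrix.fromBlocks R₁₁ R₁₂ 0 R₂₂)ᵀ * (Matrix.fromBlocks R₁₁ R₁₂ 0 R₂₂)) 0 0 0
      + Uᵀ * U).submatrix (eAs (n₁:=n₁) (n₂:=n₂) (m:=m)) eAs
    = Matrix.fromBlocks (R₁₁ᵀ * R₁₁) (R₁₁ᵀ * Q0 R₁₂) (R₁₁ᵀ * Q0 R₁₂)ᵀ
        (Matrix.fromBlocks (R₁₂ᵀ * R₁₂ + R₂₂ᵀ * R₂₂) 0 0 0 + (U2 U)ᵀ * (U2 U)) := by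
  ext i j
  rcases i with i | (i | i) <;> rcases j with j | (j | j) <;>
    simp [eAs, Q0, U2, Matrix.mul_apply, Fintype.sum_sum_type, hU, Equiv.sumAssoc,
      Matrix.fromBlocks, Matrix.add_apply, mul_comm]

lemma hMs_eq (hU : ∀ (r : Fin h) (i : Fin n₁), U r (Sum.inl (Sum.inl i)) = 0) :
    (Matrix.fromBlocks ((Matrix.fromBlocks (Matrix.diagonal fun i => R₁₁ i i) 0 0 R₂₂)ᵀ
        * (Matrix.fromBlocks (Matrix.diagonal fun i => R₁₁ i i) 0 0 R₂₂)) 0 0 0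
      + Uᵀ * U).submatrix (eAs (n₁:=n₁) (n₂:=n₂) (m:=m)) eAs
    = Matrix.fromBlocks ((Matrix.diagonal fun i => R₁₁ i i) * (Matrix.diagonal fun i => R₁₁ i i)) 0 0
        (Matrix.fromBlocks (R₂₂ᵀ * R₂₂) 0 0 0 + (U2 U)ᵀ * (U2 U)) := by
  ext i j
  rcases i with i | (i | i) <;> rcases j with j | (j | j) <;>
    simp [eAs, U2, Matrix.mul_apply, Fintype.sum_sum_type, hU, Equiv.sumAssoc,
      Matrix.fromBlocks, Matrix.add_apply, Matrix.diagonal, mul_comm, Finset.sum_ite_eq,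
      Finset.sum_ite_eq']
  rcases eq_or_ne i j with rfl | hij
  · rfl
  · simp [hij, Ne.symm hij]
end

theorem sparsified_augmented_det_eq {n₁ n₂ m h : ℕ}
    (R₁₁ : Matrix (Fin n₁) (Fin n₁) ℝ) (R₁₂ : Matrix (Fin n₁) (Fin n₂) ℝ)
    (R₂₂ : Matrix (Fin n₂) (Fin n₂) ℝ)
    (htri₁ : ∀ i j : Fin n₁, j < i → R₁₁ i j = 0)
    (htri₂ : ∀ i j : Fin n₂, j < i → R₂₂ i j = 0)
    (U : Matrix (Fin h) ((Fin n₁ ⊕ Fin n₂) ⊕ Fin m) ℝ)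
    (hU : ∀ (r : Fin h) (i : Fin n₁), U r (Sum.inl (Sum.inl i)) = 0) :
    letI R : Matrix (Fin n₁ ⊕ Fin n₂) (Fin n₁ ⊕ Fin n₂) ℝ :=
      Matrix.fromBlocks R₁₁ R₁₂ 0 R₂₂
    letI Rs : Matrix (Fin n₁ ⊕ Fin n₂) (Fin n₁ ⊕ Fin n₂) ℝ :=
      Matrix.fromBlocks (Matrix.diagonal fun i => R₁₁ i i) 0 0 R₂₂
    letI Λaug : Matrix ((Fin n₁ ⊕ Fin n₂) ⊕ Fin m) ((Fin n₁ ⊕ Fin n₂) ⊕ Fin m) ℝ :=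
      Matrix.fromBlocks (Rᵀ * R) 0 0 0
    letI Λsaug : Matrix ((Fin n₁ ⊕ Fin n₂) ⊕ Fin m) ((Fin n₁ ⊕ Fin n₂) ⊕ Fin m) ℝ :=
      Matrix.fromBlocks (Rsᵀ * Rs) 0 0 0
    (Λaug + Uᵀ * U).det = (Λsaug + Uᵀ * U).det := by
  show (Matrix.fromBlocks ((Matrix.fromBlocks R₁₁ R₁₂ 0 R₂₂)ᵀ * Matrix.fromBlocks R₁₁ R₁₂ 0 R₂₂)
        0 0 0 + Uᵀ * U).det
    = (Matrix.fromBlocks ((Matrix.fromBlocks (Matrix.diagonal fun i => R₁₁ i i) 0 0 R₂₂)ᵀ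
        * Matrix.fromBlocks (Matrix.diagonal fun i => R₁₁ i i) 0 0 R₂₂) 0 0 0 + Uᵀ * U).det
  have hdetR : R₁₁.det = ∏ i, R₁₁ i i := Matrix.det_of_upperTriangular htri₁
  by_cases hdet : R₁₁.det = 0
  · rw [key_zero R₁₁ R₁₂ R₂₂ U hU hdet, key_zero _ 0 R₂₂ U hU ?_]
    rw [Matrix.det_diagonal, ← hdetR]
    exact hdet
  · -- invertible case
    haveI : Invertible R₁₁ := R₁₁.invertibleOfIsUnitDet (isUnit_iff_ne_zero.mpr hdet)
    haveI : Invertible R₁₁ᵀ := R₁₁.invertibleTranspose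
    haveI : Invertible (R₁₁ᵀ * R₁₁) := invertibleMul _ _
    rw [← Matrix.det_submatrix_equiv_self eAs, hM_eq R₁₁ R₁₂ R₂₂ U hU,
      ← Matrix.det_submatrix_equiv_self eAs, hMs_eq R₁₁ R₂₂ U hU,
      Matrix.det_fromBlocks₁₁, Matrix.det_fromBlocks_zero₂₁]
    have hQ : (R₁₁ᵀ * Q0 (m:=m) R₁₂)ᵀ * ⅟(R₁₁ᵀ * R₁₁) * (R₁₁ᵀ * Q0 (m:=m) R₁₂)
        = (Q0 (m:=m) R₁₂)ᵀ * Q0 (m:=m) R₁₂ := by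
      rw [Matrix.transpose_mul, Matrix.transpose_transpose, invOf_mul]
      simp only [Matrix.mul_assoc, invOf_mul_cancel_left, mul_invOf_cancel_left, Matrix.invOf_mul_cancel_left, Matrix.mul_invOf_cancel_left]
    have hQ0 : (Q0 (m:=m) R₁₂)ᵀ * Q0 (m:=m) R₁₂
        = Matrix.fromBlocks (R₁₂ᵀ * R₁₂) (0 : Matrix (Fin n₂) (Fin m) ℝ) 0 0 := by
      ext i j
      rcases i with i | i <;> rcases j with j | j <;>
        simp [Q0, Matrix.mul_apply]
    rw [hQ, hQ0]
    have hS : Matrix.fromBlocks (R₁₂ᵀ * R₁₂ + R₂₂ᵀ * R₂₂) 0 0 0 + (U2 U)ᵀ * U2 U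
        - Matrix.fromBlocks (R₁₂ᵀ * R₁₂) (0 : Matrix (Fin n₂) (Fin m) ℝ) 0 0
        = Matrix.fromBlocks (R₂₂ᵀ * R₂₂) 0 0 0 + (U2 U)ᵀ * U2 U := by
      rw [show (Matrix.fromBlocks (R₁₂ᵀ * R₁₂ + R₂₂ᵀ * R₂₂) 0 0 0 :
            Matrix (Fin n₂ ⊕ Fin m) (Fin n₂ ⊕ Fin m) ℝ)
          = Matrix.fromBlocks (R₁₂ᵀ * R₁₂) 0 0 0 + Matrix.fromBlocks (R₂₂ᵀ * R₂₂) 0 0 0 by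
        rw [Matrix.fromBlocks_add]; simp]
      abel
    rw [hS]
    congr 1
    rw [Matrix.det_mul, Matrix.det_mul, Matrix.det_transpose, Matrix.det_diagonal, ← hdetR]
end

section
/- Let Λ be an n×n real positive definite matrix (n = n₁ + n₂) and let R be its upper triangular Cholesky factor with positive diagonal, so Λ = Rᵀ R. Let R_s be obtained from R by zeroing every off-diagonal entry in the first n₁ rows, and set Λ_s = R_sᵀ R_s. Then for every real h×n matrix U whose first n₁ columns are identically zero: (1) Λ + Uᵀ U and Λ_s + Uᵀ U are positive definite, and (2) ln det(Λ + Uᵀ U) = ln det(Λ_s + Uᵀ U); in particular the entropy-based objective values ½(ln det(Λ + Uᵀ U) − n·ln(2πe)) of the original and sparsified beliefs coincide, so the simplification offset of this sparsification is zero. -/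
open Matrix

private lemma posDef_conj_aux {N : ℕ} (A W : Matrix (Fin N) (Fin N) ℝ)
    (hA : A.PosDef) (hW : IsUnit W.det) : (Wᵀ * A * W).PosDef := by
  have hAsym : Aᵀ = A := by
    have := hA.isHermitian
    rwa [IsHermitian, conjTranspose_eq_transpose_of_trivial] at this
  rw [posDef_iff_dotProduct_mulVec]
  constructor
  · rw [IsHermitian, conjTranspose_eq_transpose_of_trivial]
    rw [transpose_mul, transpose_mul, transpose_transpose, hAsym, mul_assoc]
  · intro x hx
    have hWx : W *ᵥ x ≠ 0 := by
      intro h0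
      apply hx
      have := congrArg (fun v => W⁻¹ *ᵥ v) h0
      simpa [mulVec_mulVec, nonsing_inv_mul W hW] using this
    have key : star x ⬝ᵥ ((Wᵀ * A * W) *ᵥ x)
        = star (W *ᵥ x) ⬝ᵥ (A *ᵥ (W *ᵥ x)) := by
      simp only [star_trivial]
      rw [← mulVec_mulVec, ← mulVec_mulVec, dotProduct_mulVec, vecMul_transpose]
    rw [key]
    exact hA.dotProduct_mulVec_pos hWx

theorem sparsification_zero_offset {n₁ n₂ h : ℕ}
    (Λ R : Matrix (Fin (n₁ + n₂)) (Fin (n₁ + n₂)) ℝ)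
    (hΛ : Λ.PosDef)
    (hRtri : ∀ i j : Fin (n₁ + n₂), j < i → R i j = 0)
    (hRdiag : ∀ i : Fin (n₁ + n₂), 0 < R i i)
    (hfac : Λ = Rᵀ * R)
    (Rs : Matrix (Fin (n₁ + n₂)) (Fin (n₁ + n₂)) ℝ)
    (hRs : ∀ i j : Fin (n₁ + n₂),
      Rs i j = if (i : ℕ) < n₁ ∧ i ≠ j then 0 else R i j)
    (U : Matrix (Fin h) (Fin (n₁ + n₂)) ℝ)
    (hU : ∀ (r : Fin h) (j : Fin (n₁ + n₂)), (j : ℕ) < n₁ → U r j = 0) :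
    (Λ + Uᵀ * U).PosDef ∧ (Rsᵀ * Rs + Uᵀ * U).PosDef ∧
    Real.log (Λ + Uᵀ * U).det = Real.log (Rsᵀ * Rs + Uᵀ * U).det ∧
    (1 / 2 : ℝ) * (Real.log (Λ + Uᵀ * U).det
        - (n₁ + n₂ : ℝ) * Real.log (2 * Real.pi * Real.exp 1))
      = (1 / 2 : ℝ) * (Real.log (Rsᵀ * Rs + Uᵀ * U).det
        - (n₁ + n₂ : ℝ) * Real.log (2 * Real.pi * Real.exp 1)) := by
  -- basic facts about R
  have hRbt : R.BlockTriangular id := fun i j hij => hRtri i j hij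
  have hdetR : R.det = ∏ i, R i i := det_of_upperTriangular hRbt
  have hdetRpos : 0 < R.det := hdetR ▸ Finset.prod_pos fun i _ => hRdiag i
  have hdetRu : IsUnit R.det := (hdetRpos.ne').isUnit
  haveI : Invertible R := R.invertibleOfIsUnitDet hdetRu
  -- Rs facts
  have hRsdiag : ∀ i, Rs i i = R i i := by
    intro i; rw [hRs i i]; simp
  have hRsbt : Rs.BlockTriangular id := by
    intro i j hij
    rw [hRs i j]
    split
    · rfl
    · exact hRtri i j hij
  have hdetRs : Rs.det = R.det := by
    rw [det_of_upperTriangular hRsbt, hdetR]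
    exact Finset.prod_congr rfl fun i _ => hRsdiag i
  -- the conjugating matrix
  set W := R⁻¹ * Rs with hW
  have hRW : R * W = Rs := mul_nonsing_inv_cancel_left R Rs hdetRu
  have hdetW : W.det = 1 := by
    have : R.det * W.det = R.det := by
      rw [← det_mul, hRW, hdetRs]
    have := mul_left_cancel₀ hdetRpos.ne' (this.trans (mul_one R.det).symm)
    exact this
  -- R⁻¹ is upper triangular
  have hRinvbt : R⁻¹.BlockTriangular id := blockTriangular_inv_of_blockTriangular hRbt
  -- U * R⁻¹ has zero first n₁ columns
  have hV : ∀ (r : Fin h) (j : Fin (n₁ + n₂)), (j : ℕ) < n₁ → (U * R⁻¹) r j = 0 := by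
    intro r j hj
    rw [mul_apply]
    refine Finset.sum_eq_zero fun k _ => ?_
    by_cases hk : (k : ℕ) < n₁
    · rw [hU r k hk, zero_mul]
    · have hjk : (j : ℕ) < (k : ℕ) := lt_of_lt_of_le hj (le_of_not_gt hk)
      rw [hRinvbt (show (id j : ℕ) < id k from hjk), mul_zero]
  have hUW : U * W = U := by
    have h1 : U * R⁻¹ * Rs = U * R⁻¹ * R := by
      ext r j
      rw [mul_apply, mul_apply]
      refine Finset.sum_congr rfl fun k _ => ?_
      by_cases hk : (k : ℕ) < n₁
      · rw [hV r k hk, zero_mul, zero_mul]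
      · rw [hRs k j, if_neg (fun hc => hk hc.1)]
    calc U * W = U * R⁻¹ * Rs := by rw [hW, ← Matrix.mul_assoc]
      _ = U * R⁻¹ * R := h1
      _ = U := by rw [Matrix.mul_assoc, nonsing_inv_mul R hdetRu, Matrix.mul_one]
  -- key conjugation identity
  have hkey : Wᵀ * (Λ + Uᵀ * U) * W = Rsᵀ * Rs + Uᵀ * U := by
    have e : Wᵀ * (Rᵀ * R + Uᵀ * U) * W = (R * W)ᵀ * (R * W) + (U * W)ᵀ * (U * W) := by
      simp only [transpose_mul, Matrix.add_mul, Matrix.mul_add, Matrix.mul_assoc]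
    rw [hfac, e, hRW, hUW]
  -- positive definiteness
  have hUU : (Uᵀ * U).PosSemidef := by
    have := posSemidef_conjTranspose_mul_self U
    rwa [conjTranspose_eq_transpose_of_trivial] at this
  have hA : (Λ + Uᵀ * U).PosDef := hΛ.add_posSemidef hUU
  have hB : (Rsᵀ * Rs + Uᵀ * U).PosDef := by
    rw [← hkey]
    exact posDef_conj_aux _ W hA (hdetW ▸ isUnit_one)
  have hdet : (Λ + Uᵀ * U).det = (Rsᵀ * Rs + Uᵀ * U).det := by
    have := congrArg Matrix.det hkey
    rwa [det_mul, det_mul, det_transpose, hdetW, one_mul, mul_one] at this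
  exact ⟨hA, hB, by rw [hdet], by rw [hdet]⟩
end

section
/- Let A be a real n₁×n₁ matrix, C a real n₁×q matrix, B a real p×q matrix, and let M be the (n₁+p)×(n₁+q) block matrix M = [[A, C],[0, B]]. Then det(Mᵀ M) = det(A)² · det(Bᵀ B). -/
open Matrix

theorem block_gram_det {n₁ p q : ℕ}
    (A : Matrix (Fin n₁) (Fin n₁) ℝ) (C : Matrix (Fin n₁) (Fin q) ℝ)
    (B : Matrix (Fin p) (Fin q) ℝ) :
    letI M : Matrix (Fin n₁ ⊕ Fin p) (Fin n₁ ⊕ Fin q) ℝ :=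
      Matrix.fromBlocks A C 0 B
    (Mᵀ * M).det = A.det ^ 2 * (Bᵀ * B).det := by

  have h : (fromBlocks A C 0 B)ᵀ * fromBlocks A C 0 B = fromBlocks Aᵀ 0 Cᵀ 1 * fromBlocks A C 0 (Bᵀ * B) := by
    simp [fromBlocks_transpose, fromBlocks_multiply, Matrix.mul_assoc]
  rw [h, det_mul, det_fromBlocks_zero₁₂, det_fromBlocks_zero₂₁,
    det_transpose, det_one, mul_one]
  ring
end

section
/- Let Λ and Λ_s be N×N real positive definite matrices with det Λ = det Λ_s, and let u ∈ ℝᴺ be a vector such that 1 + uᵀ(Λ⁻¹ − Λ_s⁻¹)u > 0. Then |ln det(Λ + u uᵀ) − ln det(Λ_s + u uᵀ)| ≤ |ln(1 + uᵀ(Λ⁻¹ − Λ_s⁻¹)u)|. -/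
open Matrix

lemma scalar_key {a b : ℝ} (ha : 0 ≤ a) (hb : 0 ≤ b) (h : 0 < 1 + (a - b)) :
    |Real.log (1 + a) - Real.log (1 + b)| ≤ |Real.log (1 + (a - b))| := by
  rcases le_total b a with hab | hab
  · have h1 : Real.log (1 + a) ≤ Real.log ((1 + b) * (1 + (a - b))) := by
      apply Real.log_le_log (by linarith)
      nlinarith
    rw [Real.log_mul (by positivity) (by positivity)] at h1
    have h2 : Real.log (1 + b) ≤ Real.log (1 + a) :=
      Real.log_le_log (by linarith) (by linarith)
    rw [abs_of_nonneg (by linarith), abs_of_nonneg (Real.log_nonneg (by linarith))]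
    linarith
  · have h1 : Real.log ((1 + b) * (1 + (a - b))) ≤ Real.log (1 + a) := by
      apply Real.log_le_log (by positivity)
      nlinarith
    rw [Real.log_mul (by positivity) (by positivity)] at h1
    have h2 : Real.log (1 + a) ≤ Real.log (1 + b) :=
      Real.log_le_log (by linarith) (by linarith)
    have h3 : Real.log (1 + (a - b)) ≤ 0 := Real.log_nonpos (by linarith) (by linarith)
    rw [abs_of_nonpos (by linarith), abs_of_nonpos h3]
    linarith

lemma det_lemma {N : ℕ} {A : Matrix (Fin N) (Fin N) ℝ} (hA : A.PosDef) (u : Fin N → ℝ) :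
    (A + Matrix.vecMulVec u u).det = A.det * (1 + u ⬝ᵥ (A⁻¹ *ᵥ u)) := by
  rw [Matrix.vecMulVec_eq Unit, Matrix.det_add_replicateCol_mul_replicateRow hA.det_pos.ne'.isUnit]
  congr 1
  rw [Matrix.det_unique]
  simp [Matrix.mul_apply, dotProduct, Matrix.mulVec, Finset.mul_sum, mul_comm]
  rw [Finset.sum_comm]
  exact Finset.sum_congr rfl fun x _ => Finset.sum_congr rfl fun i _ => by ring

theorem rank_one_offset_bound {N : ℕ}
    (Λ Λs : Matrix (Fin N) (Fin N) ℝ)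
    (hΛ : Λ.PosDef) (hΛs : Λs.PosDef) (hdet : Λ.det = Λs.det)
    (u : Fin N → ℝ)
    (hpos : 0 < 1 + u ⬝ᵥ ((Λ⁻¹ - Λs⁻¹) *ᵥ u)) :
    |Real.log (Λ + Matrix.vecMulVec u u).det
        - Real.log (Λs + Matrix.vecMulVec u u).det|
      ≤ |Real.log (1 + u ⬝ᵥ ((Λ⁻¹ - Λs⁻¹) *ᵥ u))| := by
  have ha : 0 ≤ u ⬝ᵥ (Λ⁻¹ *ᵥ u) := by
    simpa using hΛ.inv.posSemidef.dotProduct_mulVec_nonneg u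
  have hb : 0 ≤ u ⬝ᵥ (Λs⁻¹ *ᵥ u) := by
    simpa using hΛs.inv.posSemidef.dotProduct_mulVec_nonneg u
  have hsub : u ⬝ᵥ ((Λ⁻¹ - Λs⁻¹) *ᵥ u) = u ⬝ᵥ (Λ⁻¹ *ᵥ u) - u ⬝ᵥ (Λs⁻¹ *ᵥ u) := by
    rw [Matrix.sub_mulVec, dotProduct_sub]
  rw [det_lemma hΛ u, det_lemma hΛs u, hdet,
    Real.log_mul hΛs.det_pos.ne' (show (0:ℝ) < 1 + u ⬝ᵥ Λ⁻¹ *ᵥ u by linarith).ne',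
    Real.log_mul hΛs.det_pos.ne' (show (0:ℝ) < 1 + u ⬝ᵥ Λs⁻¹ *ᵥ u by linarith).ne', hsub]
  have := scalar_key ha hb (by rwa [hsub] at hpos)
  simpa [add_sub_add_left_eq_sub] using this
end
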